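/- For the xy-model Hamiltonian H on the torus (Fin ν → ZMod L) with on-site potential u : Λ → ℝ satisfying u x ≥ γ for all x, for some γ > 0: every eigenvalue λ of H satisfies λ = 0 or λ ≥ γ, and the kernel of H is the one-dimensional span of ψ₀, where ψ₀(σ) = 1 if σ is the all-zero (all-spin-down) configuration and ψ₀(σ) = 0 otherwise. (The xy-model has a unique ground state with spectral gap at least γ.) -/

import Mathlib

/-!
Write `H = D - A`, where `D` is the diagonal of on-site energies and `A` is the adjacency matrix
of the graph on configurations whose edges are nearest-neighbour exchanges. A configuration with
`n` up spins has at most `2νn` exchange partners, so bounding `Re ⟪ψ, Aψ⟫` by the degree form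
(positivity of the graph Laplacian evaluated at `|ψ|`) gives
`Re ⟪ψ, Hψ⟫ ≥ Σ_σ γ n(σ) |ψ σ|² ≥ γ Σ_{σ ≠ 0} |ψ σ|²`.
The all-down configuration `0` has zero energy and no exchange partners, so the row and column
of `H` at `0` vanish. Hence an eigenvector of a nonzero eigenvalue vanishes at `0`, which forces
the eigenvalue to be at least `γ`, and a vector in the kernel vanishes away from `0`.
-/

/-- Two sites of the discrete torus `Fin ν → ZMod L` are nearest neighbors if they differ by
`±1` in exactly one coordinate. -/
def IsNearestNeighbor {ν L : ℕ} (x y : Fin ν → ZMod L) : Prop :=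
  ∃ i : Fin ν, y = Function.update x i (x i + 1) ∨ y = Function.update x i (x i - 1)

/-- `τ` is obtained from `σ` by exchanging the distinct values `σ x ≠ σ y` at a
nearest-neighbor pair `(x, y)`. -/
def IsExchange {ν L : ℕ} (σ τ : (Fin ν → ZMod L) → Fin 2) : Prop :=
  ∃ x y : Fin ν → ZMod L, IsNearestNeighbor x y ∧ σ x ≠ σ y ∧
    τ = Function.update (Function.update σ x (σ y)) y (σ x)

open Classical in
/-- The xy-model Hamiltonian on the torus `Fin ν → ZMod L` with on-site potential `u`:
diagonal entry `Σ_{x : σ x = 1} (u x + 2ν)`, entry `-1` between configurations related by a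
nearest-neighbor exchange of distinct spins, and `0` otherwise. -/
noncomputable def xyHam (ν L : ℕ) [NeZero L] (u : (Fin ν → ZMod L) → ℝ) :
    Matrix ((Fin ν → ZMod L) → Fin 2) ((Fin ν → ZMod L) → Fin 2) ℂ :=
  fun σ τ =>
    if σ = τ then
      ((∑ x : Fin ν → ZMod L, if σ x = 1 then u x + 2 * ν else 0 : ℝ) : ℂ)
    else if IsExchange σ τ then -1 else 0

open Classical in
/-- The all-spin-down vector: `ψ₀(σ) = 1` exactly when `σ` is the all-zero configuration. -/
noncomputable def groundVec (ν L : ℕ) [NeZero L] :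
    EuclideanSpace ℂ ((Fin ν → ZMod L) → Fin 2) :=
  WithLp.toLp 2 (fun σ => if σ = fun _ => 0 then 1 else 0)

open Finset Matrix

theorem Matrix.re_star_dotProduct_self {ι : Type*} [Fintype ι] (ψ : ι → ℂ) :
    (star ψ ⬝ᵥ ψ).re = ∑ i, ‖ψ i‖ ^ 2 := by
  simp only [dotProduct, Pi.star_apply, Complex.re_sum, Complex.star_def, Complex.conj_mul',
    ← Complex.ofReal_pow, Complex.ofReal_re]

theorem Matrix.re_star_dotProduct_diagonal_mulVec {ι : Type*} [Fintype ι] [DecidableEq ι]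
    (d : ι → ℝ) (ψ : ι → ℂ) :
    (star ψ ⬝ᵥ diagonal (fun i => (d i : ℂ)) *ᵥ ψ).re = ∑ i, d i * ‖ψ i‖ ^ 2 := by
  simp only [dotProduct, mulVec_diagonal, Pi.star_apply, Complex.re_sum]
  refine sum_congr rfl fun i _ => ?_
  rw [mul_left_comm, Complex.star_def, Complex.conj_mul', ← Complex.ofReal_pow,
    ← Complex.ofReal_mul, Complex.ofReal_re]

namespace SimpleGraph

variable {V : Type*} [Fintype V] [DecidableEq V] (G : SimpleGraph V) [DecidableRel G.Adj]

theorem re_star_dotProduct_adjMatrix_mulVec_le (ψ : V → ℂ) :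
    (star ψ ⬝ᵥ G.adjMatrix ℂ *ᵥ ψ).re ≤ ∑ v, G.degree v * ‖ψ v‖ ^ 2 := by
  set φ : V → ℝ := fun v => ‖ψ v‖
  have hlap := (G.posSemidef_lapMatrix ℝ).dotProduct_mulVec_nonneg φ
  rw [star_trivial, lapMatrix, sub_mulVec, dotProduct_sub, sub_nonneg,
    dotProduct_mulVec_degMatrix, dotProduct_mulVec_adjMatrix] at hlap
  rw [dotProduct_mulVec_adjMatrix, Complex.re_sum]
  calc _ ≤ ∑ i, ∑ j, if G.Adj i j then φ i * φ j else 0 := by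
        gcongr with i _ j _
        rw [Complex.re_sum]
        gcongr with j
        split_ifs
        · calc (star (ψ i) * ψ j).re ≤ ‖star (ψ i) * ψ j‖ := Complex.re_le_norm _
            _ = φ i * φ j := by simp [φ]
        · simp
    _ ≤ _ := hlap.trans_eq (by simp [φ, sq, mul_assoc])

end SimpleGraph

section Exchange

variable {ν L : ℕ}

open Classical

theorem IsNearestNeighbor.symm {x y : Fin ν → ZMod L} (h : IsNearestNeighbor x y) :
    IsNearestNeighbor y x := by
  obtain ⟨i, rfl | rfl⟩ := h
  · exact ⟨i, Or.inr (by simp)⟩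
  · exact ⟨i, Or.inl (by simp)⟩

theorem isExchange_iff {σ τ : (Fin ν → ZMod L) → Fin 2} :
    IsExchange σ τ ↔
      ∃ x y, IsNearestNeighbor x y ∧ σ x ≠ σ y ∧ τ = σ ∘ Equiv.swap x y := by
  simp only [IsExchange, ← Equiv.comp_swap_eq_update]
  exact exists_congr fun x => exists_congr fun y => by rw [Equiv.swap_comm]

theorem IsExchange.symm {σ τ : (Fin ν → ZMod L) → Fin 2} (h : IsExchange σ τ) :
    IsExchange τ σ := by
  obtain ⟨x, y, hxy, hne, rfl⟩ := isExchange_iff.1 h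
  exact isExchange_iff.2 ⟨x, y, hxy, by simpa using hne.symm, by ext z; simp⟩

theorem IsExchange.ne {σ τ : (Fin ν → ZMod L) → Fin 2} (h : IsExchange σ τ) :
    σ ≠ τ := by
  obtain ⟨x, y, -, hne, rfl⟩ := isExchange_iff.1 h
  exact fun h => hne (by simpa using congrFun h x)

theorem not_isExchange_zero (τ : (Fin ν → ZMod L) → Fin 2) : ¬IsExchange 0 τ :=
  fun ⟨_, _, _, hne, _⟩ => hne rfl

def exchangeGraph (ν L : ℕ) : SimpleGraph ((Fin ν → ZMod L) → Fin 2) where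
  Adj := IsExchange
  symm := ⟨fun _ _ => IsExchange.symm⟩
  loopless := ⟨fun _ h => h.ne rfl⟩

@[simp]
theorem exchangeGraph_adj {σ τ : (Fin ν → ZMod L) → Fin 2} :
    (exchangeGraph ν L).Adj σ τ ↔ IsExchange σ τ :=
  Iff.rfl

theorem card_isNearestNeighbor_le [NeZero L] (x : Fin ν → ZMod L) :
    #{y | IsNearestNeighbor x y} ≤ 2 * ν := by
  let step (p : Fin ν × Bool) := Function.update x p.1 (x p.1 + if p.2 then 1 else -1)
  calc #{y | IsNearestNeighbor x y} ≤ #(univ.image step) := by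
        refine card_le_card fun y hy => ?_
        obtain ⟨i, rfl | rfl⟩ := (mem_filter.1 hy).2
        · exact mem_image.2 ⟨(i, true), mem_univ _, by simp [step]⟩
        · exact mem_image.2 ⟨(i, false), mem_univ _, by simp [step, sub_eq_add_neg]⟩
    _ ≤ 2 * ν := card_image_le.trans (by simp [mul_comm])

theorem exchangeGraph_degree_le [NeZero L] (σ : (Fin ν → ZMod L) → Fin 2) :
    (exchangeGraph ν L).degree σ ≤ 2 * ν * #{x | σ x = 1} := by
  let swaps (x : Fin ν → ZMod L) :=
    image (fun y => σ ∘ Equiv.swap x y) {y | IsNearestNeighbor x y}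
  -- every exchange moves one of the up spins to a neighbouring site
  have hsub : (exchangeGraph ν L).neighborFinset σ ⊆ ({x | σ x = 1} : Finset _).biUnion swaps := by
    intro τ hτ
    rw [SimpleGraph.mem_neighborFinset, exchangeGraph_adj, isExchange_iff] at hτ
    obtain ⟨x, y, hxy, hne, rfl⟩ := hτ
    rcases (by omega : σ x = 1 ∨ σ y = 1) with hx | hy
    · exact mem_biUnion.2 ⟨x, by simpa using hx, mem_image.2 ⟨y, by simpa using hxy, rfl⟩⟩
    · refine mem_biUnion.2 ⟨y, by simpa using hy, mem_image.2 ⟨x, by simpa using hxy.symm, ?_⟩⟩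
      rw [Equiv.swap_comm]
  calc (exchangeGraph ν L).degree σ = #((exchangeGraph ν L).neighborFinset σ) :=
        ((exchangeGraph ν L).card_neighborFinset_eq_degree σ).symm
    _ ≤ ∑ x ∈ {x | σ x = 1}, #(swaps x) := (card_le_card hsub).trans card_biUnion_le
    _ ≤ ∑ x ∈ {x | σ x = 1}, 2 * ν :=
        sum_le_sum fun x _ => card_image_le.trans (card_isNearestNeighbor_le x)
    _ = 2 * ν * #{x | σ x = 1} := by rw [sum_const, smul_eq_mul, mul_comm]

end Exchange

section Hamiltonian

variable {ν L : ℕ} [NeZero L] (u : (Fin ν → ZMod L) → ℝ)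

open Classical

def xyPotential (σ : (Fin ν → ZMod L) → Fin 2) : ℝ :=
  ∑ x, if σ x = 1 then u x + 2 * ν else 0

theorem xyHam_eq_diagonal_sub_adjMatrix :
    xyHam ν L u =
      diagonal (fun σ => (xyPotential u σ : ℂ)) - (exchangeGraph ν L).adjMatrix ℂ := by
  ext σ τ
  by_cases h : σ = τ
  · subst h
    simp [xyHam, xyPotential]
  · by_cases hx : IsExchange σ τ <;> simp [xyHam, h, hx]

theorem mul_card_add_degree_le_xyPotential {γ : ℝ} (hu : ∀ x, γ ≤ u x)
    (σ : (Fin ν → ZMod L) → Fin 2) :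
    γ * #{x | σ x = 1} + (exchangeGraph ν L).degree σ ≤ xyPotential u σ := by
  have hdeg : ((exchangeGraph ν L).degree σ : ℝ) ≤ 2 * ν * #{x | σ x = 1} := by
    exact_mod_cast exchangeGraph_degree_le σ
  calc γ * #{x | σ x = 1} + (exchangeGraph ν L).degree σ
      ≤ ∑ x ∈ {x | σ x = 1}, (γ + 2 * ν) := by rw [sum_const, nsmul_eq_mul]; linarith
    _ ≤ ∑ x ∈ {x | σ x = 1}, (u x + 2 * ν) := sum_le_sum fun x _ => by linarith [hu x]
    _ = xyPotential u σ := by rw [xyPotential, sum_filter]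

theorem one_le_card_filter_eq_one {σ : (Fin ν → ZMod L) → Fin 2} (hσ : σ ≠ 0) :
    1 ≤ #{x | σ x = 1} := by
  obtain ⟨x, hx⟩ := Function.ne_iff.1 hσ
  rw [Pi.zero_apply] at hx
  exact card_pos.2 ⟨x, by simpa using (by omega : σ x = 1)⟩

theorem le_re_star_dotProduct_xyHam_mulVec {γ : ℝ} (hγ : 0 ≤ γ) (hu : ∀ x, γ ≤ u x)
    (ψ : ((Fin ν → ZMod L) → Fin 2) → ℂ) :
    γ * ∑ σ ∈ univ.erase 0, ‖ψ σ‖ ^ 2 ≤ (star ψ ⬝ᵥ xyHam ν L u *ᵥ ψ).re := by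
  rw [xyHam_eq_diagonal_sub_adjMatrix, sub_mulVec, dotProduct_sub, Complex.sub_re,
    re_star_dotProduct_diagonal_mulVec]
  have hadj := (exchangeGraph ν L).re_star_dotProduct_adjMatrix_mulVec_le ψ
  calc γ * ∑ σ ∈ univ.erase 0, ‖ψ σ‖ ^ 2
      ≤ ∑ σ, γ * #{x | σ x = 1} * ‖ψ σ‖ ^ 2 := by
        rw [mul_sum]
        refine (sum_le_sum fun σ hσ => ?_).trans
          (sum_le_sum_of_subset_of_nonneg (erase_subset _ _) fun σ _ _ => by positivity)
        have : (1 : ℝ) ≤ #{x | σ x = 1} := by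
          exact_mod_cast one_le_card_filter_eq_one (ne_of_mem_erase hσ)
        have : 0 ≤ γ * ‖ψ σ‖ ^ 2 := by positivity
        nlinarith
    _ ≤ ∑ σ, (xyPotential u σ - (exchangeGraph ν L).degree σ) * ‖ψ σ‖ ^ 2 := by
        gcongr with σ
        linarith [mul_card_add_degree_le_xyPotential u hu σ]
    _ ≤ _ := by
        simp only [sub_mul, sum_sub_distrib]
        linarith

theorem xyHam_zero_left (τ : (Fin ν → ZMod L) → Fin 2) : xyHam ν L u 0 τ = 0 := by
  by_cases h : 0 = τ
  · subst h
    simp [xyHam]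
  · simp [xyHam, h, not_isExchange_zero]

theorem xyHam_zero_right (σ : (Fin ν → ZMod L) → Fin 2) : xyHam ν L u σ 0 = 0 := by
  by_cases h : σ = 0
  · subst h
    exact xyHam_zero_left u 0
  · simp only [xyHam, h, if_false, ite_eq_right_iff]
    exact fun hx => (not_isExchange_zero σ hx.symm).elim

theorem le_of_xyHam_mulVec_eq_smul {γ : ℝ} (hγ : 0 ≤ γ) (hu : ∀ x, γ ≤ u x) {lam : ℝ}
    (hlam : lam ≠ 0) {ψ : ((Fin ν → ZMod L) → Fin 2) → ℂ} (hψ : ψ ≠ 0)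
    (h : xyHam ν L u *ᵥ ψ = (lam : ℂ) • ψ) : γ ≤ lam := by
  have hψ0 : ψ 0 = 0 := by
    have := congrFun h 0
    simp [mulVec, dotProduct, xyHam_zero_left] at this
    exact this.resolve_left hlam
  have hpos : 0 < ∑ σ, ‖ψ σ‖ ^ 2 := by
    obtain ⟨σ, hσ⟩ := Function.ne_iff.1 hψ
    exact sum_pos' (fun _ _ => by positivity) ⟨σ, mem_univ _, pow_pos (norm_pos_iff.2 hσ) 2⟩
  have hform := le_re_star_dotProduct_xyHam_mulVec u hγ hu ψ
  rw [h, dotProduct_smul, smul_eq_mul, Complex.re_ofReal_mul, re_star_dotProduct_self,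
    sum_erase _ (by simp [hψ0])] at hform
  exact le_of_mul_le_mul_right hform hpos

theorem eq_zero_of_xyHam_mulVec_eq_zero {γ : ℝ} (hγ : 0 < γ) (hu : ∀ x, γ ≤ u x)
    {ψ : ((Fin ν → ZMod L) → Fin 2) → ℂ} (h : xyHam ν L u *ᵥ ψ = 0)
    {σ : (Fin ν → ZMod L) → Fin 2} (hσ : σ ≠ 0) : ψ σ = 0 := by
  have hform := le_re_star_dotProduct_xyHam_mulVec u hγ.le hu ψ
  rw [h, dotProduct_zero, Complex.zero_re] at hform
  have hsum : ∑ σ ∈ univ.erase 0, ‖ψ σ‖ ^ 2 = 0 :=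
    le_antisymm (nonpos_of_mul_nonpos_right hform hγ) (sum_nonneg fun _ _ => by positivity)
  simpa using (sum_eq_zero_iff_of_nonneg fun _ _ => by positivity).1 hsum σ (by simpa using hσ)

theorem groundVec_eq_single : groundVec ν L = EuclideanSpace.single 0 1 := by
  ext σ
  simp [groundVec, Pi.zero_def]

end Hamiltonian

theorem xy_model_unique_gapped_ground_state_general
    (ν L : ℕ) [NeZero L]
    (u : (Fin ν → ZMod L) → ℝ) (γ : ℝ) (hγ : 0 < γ) (hu : ∀ x, γ ≤ u x) :
    (∀ lam : ℝ,
        Module.End.HasEigenvalue (Matrix.toEuclideanLin (xyHam ν L u)) (lam : ℂ) →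
        lam = 0 ∨ γ ≤ lam) ∧
      LinearMap.ker (Matrix.toEuclideanLin (xyHam ν L u)) =
        Submodule.span ℂ {groundVec ν L} := by
  rw [groundVec_eq_single]
  refine ⟨fun lam hlam => or_iff_not_imp_left.2 fun hlam0 => ?_,
    le_antisymm (fun ψ hψ => ?_) ?_⟩
  · obtain ⟨ψ, hψ⟩ := hlam.exists_hasEigenvector
    exact le_of_xyHam_mulVec_eq_smul u hγ.le hu hlam0 (by simpa using hψ.2)
      (congrArg WithLp.ofLp hψ.apply_eq_smul)
  · refine Submodule.mem_span_singleton.2 ⟨ψ 0, ?_⟩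
    ext σ
    rcases eq_or_ne σ 0 with rfl | hσ
    · simp
    · have hHψ : xyHam ν L u *ᵥ ψ.ofLp = 0 := congrArg WithLp.ofLp (LinearMap.mem_ker.1 hψ)
      simp [hσ, eq_zero_of_xyHam_mulVec_eq_zero u hγ hu hHψ hσ]
  · rw [Submodule.span_singleton_le_iff_mem, LinearMap.mem_ker]
    ext σ
    simp [xyHam_zero_right]

/-- For on-site potential bounded below by `γ > 0`, every eigenvalue of the xy-model
Hamiltonian is `0` or at least `γ`, and its kernel is the (one-dimensional) span of the
all-spin-down vector `ψ₀`: unique ground state with spectral gap at least `γ`. -/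
theorem xy_model_unique_gapped_ground_state
    (ν L : ℕ) (hν : 1 ≤ ν) [NeZero L] (hL : 3 ≤ L)
    (u : (Fin ν → ZMod L) → ℝ) (γ : ℝ) (hγ : 0 < γ) (hu : ∀ x, γ ≤ u x) :
    (∀ lam : ℝ,
        Module.End.HasEigenvalue (Matrix.toEuclideanLin (xyHam ν L u)) (lam : ℂ) →
        lam = 0 ∨ γ ≤ lam) ∧
      LinearMap.ker (Matrix.toEuclideanLin (xyHam ν L u)) =
        Submodule.span ℂ {groundVec ν L} :=
  xy_model_unique_gapped_ground_state_general ν L u γ hγ hu
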